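/- arXiv:0912.4602 — 8 statements merged into one kernel-verified Lean document; each statement's English description precedes it below -/
import Mathlib

section
/- Let G be a k-tree and define the graph T(G) with vertex set the set of all k-cliques and (k+1)-cliques of G, and edges between M₁ and M₂ whenever M₁ ⊊ M₂. Then T(G) is a tree. -/
/-- The edge set of a complete graph on the vertex set `V`. -/
def cliqueEdges (V : Finset ℕ) : Finset (Sym2 ℕ) :=
  ((V ×ˢ V).filter (fun p => p.1 ≠ p.2)).image (fun p => s(p.1, p.2))

/-- `X` is a clique with respect to the edge set `E`. -/
def IsCliqueIn (E : Finset (Sym2 ℕ)) (X : Finset ℕ) : Prop :=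
  ∀ x ∈ X, ∀ y ∈ X, x ≠ y → s(x, y) ∈ E

/-- Inductive definition of a `k`-tree with vertex set `V` and edge set `E`:
a `k`-clique is a `k`-tree, and one may add a new vertex joined to all
vertices of an existing `k`-clique (the support). -/
inductive IsKTree (k : ℕ) : Finset ℕ → Finset (Sym2 ℕ) → Prop where
  | base (V : Finset ℕ) (h : V.card = k) : IsKTree k V (cliqueEdges V)
  | extend (V : Finset ℕ) (E : Finset (Sym2 ℕ)) (X : Finset ℕ) (v : ℕ)
      (ht : IsKTree k V E) (hXV : X ⊆ V) (hX : X.card = k)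
      (hclique : IsCliqueIn E X) (hv : v ∉ V) :
      IsKTree k (insert v V) (E ∪ X.image (fun x => s(x, v)))
/-- The tree representation `T(G)` of a `k`-tree `G`: nodes are the
`k`-cliques and `(k+1)`-cliques of `G`, with an edge between `M₁` and `M₂`
whenever `M₁ ⊊ M₂` (or vice versa). -/
def treeRep (k : ℕ) (V : Finset ℕ) (E : Finset (Sym2 ℕ)) :
    SimpleGraph {M : Finset ℕ // M ⊆ V ∧ IsCliqueIn E M ∧ (M.card = k ∨ M.card = k + 1)} where
  Adj M₁ M₂ := M₁.1 ⊂ M₂.1 ∨ M₂.1 ⊂ M₁.1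
  symm := by constructor; intro a b h; tauto
  loopless := by
    constructor
    intro a h
    rcases h with h' | h' <;> exact ssubset_irrefl _ h'

/-! Induction on the `k`-tree. Attaching a vertex `v` to the `k`-clique `X` adds to `T(G)` the
`(k+1)`-clique `A = X ∪ {v}`, adjacent to `X`, and the `k`-cliques containing `v`, which are the
sets `A \ {x}` for `x ∈ X` and are adjacent to `A` only. So `T(G)` grows by a star hung at `X`:
it stays connected, and a cycle, whose vertices all have two neighbours on it, can pass neither
through one of the new `k`-cliques nor, after that, through `A`. -/

open SimpleGraph

lemma SimpleGraph.Walk.IsCycle.exists_adj_adj_ne {α : Type*} [DecidableEq α] {G : SimpleGraph α}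
    {u x : α} {p : G.Walk u u} (hp : p.IsCycle) (hx : x ∈ p.support) :
    ∃ y z, y ≠ z ∧ G.Adj x y ∧ G.Adj x z ∧ y ∈ p.support ∧ z ∈ p.support := by
  have hq : (p.rotate x hx).IsCycle := hp.rotate hx
  refine ⟨_, _, hq.snd_ne_penultimate, Walk.adj_snd hq.not_nil,
    (Walk.adj_penultimate hq.not_nil).symm, ?_, ?_⟩ <;>
    exact (p.mem_support_rotate_iff x hx).mp (Walk.getVert_mem_support _ _)

lemma IsKTree.mem_of_mem_edge {k : ℕ} {V : Finset ℕ} {E : Finset (Sym2 ℕ)} (h : IsKTree k V E)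
    {e : Sym2 ℕ} (he : e ∈ E) {x : ℕ} (hx : x ∈ e) : x ∈ V := by
  induction h with
  | base V _ =>
    obtain ⟨⟨a, b⟩, hab, rfl⟩ := Finset.mem_image.mp he
    simp only [Finset.mem_filter, Finset.mem_product] at hab
    rcases Sym2.mem_iff.mp hx with rfl | rfl
    exacts [hab.1.1, hab.1.2]
  | extend V E X v _ hXV _ _ _ ih =>
    rcases Finset.mem_union.mp he with he | he
    · exact Finset.mem_insert_of_mem (ih he)
    · obtain ⟨a, ha, rfl⟩ := Finset.mem_image.mp he
      rcases Sym2.mem_iff.mp hx with rfl | rfl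
      · exact Finset.mem_insert_of_mem (hXV ha)
      · exact Finset.mem_insert_self _ _

def IsNode (k : ℕ) (V : Finset ℕ) (E : Finset (Sym2 ℕ)) (M : Finset ℕ) : Prop :=
  M ⊆ V ∧ IsCliqueIn E M ∧ (M.card = k ∨ M.card = k + 1)

/-- `treeRep k V E` on all of `Finset ℕ`, with the non-nodes isolated, so that the graphs of a
`k`-tree and of its extension live on a common vertex type. -/
abbrev nodeGraph (k : ℕ) (V : Finset ℕ) (E : Finset (Sym2 ℕ)) : SimpleGraph (Finset ℕ) where
  Adj M N := IsNode k V E M ∧ IsNode k V E N ∧ (M ⊂ N ∨ N ⊂ M)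
  symm := ⟨fun _ _ ⟨hM, hN, h⟩ => ⟨hN, hM, h.symm⟩⟩
  loopless := ⟨fun _ ⟨_, _, h⟩ => by rcases h with h | h <;> exact h.ne rfl⟩

section TreeRep

variable {k : ℕ} {V : Finset ℕ} {E : Finset (Sym2 ℕ)}

lemma treeRep_isAcyclic (h : (nodeGraph k V E).IsAcyclic) : (treeRep k V E).IsAcyclic :=
  h.comap (G := treeRep k V E) (G' := nodeGraph k V E)
    ⟨Subtype.val, fun {M N} hMN => ⟨M.2, N.2, hMN⟩⟩ Subtype.val_injective

lemma treeRep_reachable_of_walk {M N : Finset ℕ} (p : (nodeGraph k V E).Walk M N)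
    (hM : IsNode k V E M) (hN : IsNode k V E N) :
    (treeRep k V E).Reachable ⟨M, hM⟩ ⟨N, hN⟩ := by
  induction p with
  | nil => rfl
  | cons hadj _ ih =>
    have hstep : (treeRep k V E).Adj ⟨_, hM⟩ ⟨_, hadj.2.1⟩ := hadj.2.2
    exact hstep.reachable.trans (ih _ hN)

lemma treeRep_connected (hne : ∃ M, IsNode k V E M)
    (h : ∀ {M N}, IsNode k V E M → IsNode k V E N → (nodeGraph k V E).Reachable M N) :
    (treeRep k V E).Connected :=
  (connected_iff _).mpr
    ⟨fun M N => (h M.2 N.2).elim fun p => treeRep_reachable_of_walk p M.2 N.2,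
      hne.elim fun M hM => ⟨⟨M, hM⟩⟩⟩

end TreeRep

lemma eq_of_isNode_of_card_eq {k : ℕ} {V : Finset ℕ} {E : Finset (Sym2 ℕ)} {M : Finset ℕ}
    (hV : V.card = k) (hM : IsNode k V E M) : M = V :=
  Finset.eq_of_subset_of_card_le hM.1 (by rcases hM.2.2 with h | h <;> omega)

lemma nodeGraph_eq_bot_of_card_eq {k : ℕ} {V : Finset ℕ} {E : Finset (Sym2 ℕ)}
    (hV : V.card = k) : nodeGraph k V E = ⊥ := by
  ext M N
  refine ⟨fun ⟨hM, hN, h⟩ => ?_, False.elim⟩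
  rw [eq_of_isNode_of_card_eq hV hM, eq_of_isNode_of_card_eq hV hN] at h
  rcases h with h | h <;> exact h.ne rfl

lemma isCliqueIn_cliqueEdges (V : Finset ℕ) : IsCliqueIn (cliqueEdges V) V :=
  fun x hx y hy hxy => Finset.mem_image.mpr
    ⟨(x, y), Finset.mem_filter.mpr ⟨Finset.mem_product.mpr ⟨hx, hy⟩, hxy⟩, rfl⟩

abbrev attachEdges (E : Finset (Sym2 ℕ)) (X : Finset ℕ) (v : ℕ) : Finset (Sym2 ℕ) :=
  E ∪ X.image (fun x => s(x, v))

section Attach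

variable {k : ℕ} {V : Finset ℕ} {E : Finset (Sym2 ℕ)} {X M N : Finset ℕ} {v : ℕ}

lemma IsNode.attach (hM : IsNode k V E M) : IsNode k (insert v V) (attachEdges E X v) M :=
  ⟨hM.1.trans (Finset.subset_insert _ _),
    fun x hx y hy hxy => Finset.mem_union_left _ (hM.2.1 x hx y hy hxy), hM.2.2⟩

lemma isNode_insert_attach (hXV : X ⊆ V) (hX : X.card = k) (hclique : IsCliqueIn E X)
    (hv : v ∉ V) : IsNode k (insert v V) (attachEdges E X v) (insert v X) := by
  refine ⟨Finset.insert_subset_insert v hXV, ?_,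
    Or.inr (hX ▸ Finset.card_insert_of_notMem fun h => hv (hXV h))⟩
  intro x hx y hy hxy
  rcases Finset.mem_insert.mp hx with rfl | hx
  · have hy : y ∈ X := (Finset.mem_insert.mp hy).resolve_left hxy.symm
    exact Finset.mem_union_right _ (Finset.mem_image.mpr ⟨y, hy, Sym2.eq_swap⟩)
  rcases Finset.mem_insert.mp hy with hyv | hy
  · rw [hyv]
    exact Finset.mem_union_right _ (Finset.mem_image.mpr ⟨x, hx, rfl⟩)
  · exact Finset.mem_union_left _ (hclique x hx y hy hxy)

lemma nodeGraph_le_attach : nodeGraph k V E ≤ nodeGraph k (insert v V) (attachEdges E X v) :=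
  fun _ _ ⟨hM, hN, h⟩ => ⟨hM.attach, hN.attach, h⟩

lemma IsNode.of_attach (hM : IsNode k (insert v V) (attachEdges E X v) M) (hvM : v ∉ M) :
    IsNode k V E M := by
  refine ⟨fun x hx => (Finset.mem_insert.mp (hM.1 hx)).resolve_left
    (ne_of_mem_of_not_mem hx hvM), fun x hx y hy hxy => ?_, hM.2.2⟩
  refine (Finset.mem_union.mp (hM.2.1 x hx y hy hxy)).resolve_right fun h => ?_
  obtain ⟨a, _, heq⟩ := Finset.mem_image.mp h
  rcases Sym2.eq_iff.mp heq with ⟨_, rfl⟩ | ⟨_, rfl⟩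
  exacts [hvM hy, hvM hx]

lemma IsNode.subset_insert_of_attach (hvE : ∀ e ∈ E, v ∉ e)
    (hM : IsNode k (insert v V) (attachEdges E X v) M) (hvM : v ∈ M) : M ⊆ insert v X := by
  intro x hxM
  rcases eq_or_ne x v with rfl | hxv
  · exact Finset.mem_insert_self _ _
  rcases Finset.mem_union.mp (hM.2.1 x hxM v hvM hxv) with h | h
  · exact absurd (Sym2.mem_mk_right x v) (hvE _ h)
  · obtain ⟨a, ha, heq⟩ := Finset.mem_image.mp h
    rcases Sym2.eq_iff.mp heq with ⟨rfl, _⟩ | ⟨rfl, rfl⟩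
    exacts [Finset.mem_insert_of_mem ha, Finset.mem_insert_self _ _]

lemma IsNode.eq_insert_of_attach (hvE : ∀ e ∈ E, v ∉ e) (hX : X.card = k)
    (hM : IsNode k (insert v V) (attachEdges E X v) M) (hvM : v ∈ M) (hc : M.card = k + 1) :
    M = insert v X :=
  Finset.eq_of_subset_of_card_le (hM.subset_insert_of_attach hvE hvM)
    (hc ▸ hX ▸ Finset.card_insert_le v X)

lemma eq_insert_of_adj_attach (hvE : ∀ e ∈ E, v ∉ e) (hX : X.card = k)
    (hadj : (nodeGraph k (insert v V) (attachEdges E X v)).Adj M N) (hvM : v ∈ M)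
    (hc : M.card = k) : N = insert v X := by
  obtain ⟨_, hN, h | h⟩ := hadj
  · have := Finset.card_lt_card h
    exact hN.eq_insert_of_attach hvE hX (h.1 hvM) (by rcases hN.2.2 with h' | h' <;> omega)
  · have := Finset.card_lt_card h
    rcases hN.2.2 with h' | h' <;> omega

lemma eq_of_adj_insert_attach (hX : X.card = k)
    (hadj : (nodeGraph k (insert v V) (attachEdges E X v)).Adj (insert v X) N) (hvN : v ∉ N) :
    N = X := by
  obtain ⟨_, hN, h | h⟩ := hadj
  · exact absurd (h.1 (Finset.mem_insert_self v X)) hvN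
  · have hNX : N ⊆ X := fun x hx => (Finset.mem_insert.mp (h.1 hx)).resolve_left
      (ne_of_mem_of_not_mem hx hvN)
    have := Finset.card_lt_card h
    have := Finset.card_insert_le v X
    exact Finset.eq_of_subset_of_card_le hNX (by rcases hN.2.2 with h' | h' <;> omega)

lemma notMem_of_mem_support_attach (hvE : ∀ e ∈ E, v ∉ e) (hX : X.card = k)
    {W : Finset ℕ} {p : (nodeGraph k (insert v V) (attachEdges E X v)).Walk W W} (hp : p.IsCycle)
    {M : Finset ℕ} (hMp : M ∈ p.support) : v ∉ M := by
  have hleaf : ∀ L ∈ p.support, v ∈ L → L.card ≠ k := by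
    intro L hL hvL hc
    obtain ⟨y, z, hyz, hy, hz, -⟩ := hp.exists_adj_adj_ne hL
    exact hyz ((eq_insert_of_adj_attach hvE hX hy hvL hc).trans
      (eq_insert_of_adj_attach hvE hX hz hvL hc).symm)
  have hnode : ∀ L ∈ p.support, v ∈ L → L = insert v X := fun L hL hvL => by
    obtain ⟨y, -, -, hy, -⟩ := hp.exists_adj_adj_ne hL
    exact hy.1.eq_insert_of_attach hvE hX hvL (hy.1.2.2.resolve_left (hleaf L hL hvL))
  intro hvM
  obtain rfl := hnode M hMp hvM
  have hnbr : ∀ y, (nodeGraph k (insert v V) (attachEdges E X v)).Adj (insert v X) y →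
      y ∈ p.support → y = X := by
    intro y hy hyp
    refine eq_of_adj_insert_attach hX hy fun hvy => hy.ne ?_
    exact (hnode y hyp hvy).symm
  obtain ⟨y, z, hyz, hy, hz, hyp, hzp⟩ := hp.exists_adj_adj_ne hMp
  exact hyz ((hnbr y hy hyp).trans (hnbr z hz hzp).symm)

lemma isAcyclic_nodeGraph_attach (hvE : ∀ e ∈ E, v ∉ e) (hX : X.card = k)
    (h : (nodeGraph k V E).IsAcyclic) :
    (nodeGraph k (insert v V) (attachEdges E X v)).IsAcyclic := by
  intro W p hp
  have hedges : ∀ e ∈ p.edges, e ∈ (nodeGraph k V E).edgeSet := by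
    intro e he
    induction e using Sym2.ind with
    | _ a b =>
      have hab := p.adj_of_mem_edges he
      have hva := notMem_of_mem_support_attach hvE hX hp (p.fst_mem_support_of_mem_edges he)
      have hvb := notMem_of_mem_support_attach hvE hX hp (p.snd_mem_support_of_mem_edges he)
      exact ⟨hab.1.of_attach hva, hab.2.1.of_attach hvb, hab.2.2⟩
  exact h (p.transfer _ hedges) (hp.transfer hedges)

lemma reachable_nodeGraph_attach (hvE : ∀ e ∈ E, v ∉ e) (hXV : X ⊆ V) (hX : X.card = k)
    (hclique : IsCliqueIn E X) (hv : v ∉ V)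
    (h : ∀ {M N}, IsNode k V E M → IsNode k V E N → (nodeGraph k V E).Reachable M N)
    (hM : IsNode k (insert v V) (attachEdges E X v) M)
    (hN : IsNode k (insert v V) (attachEdges E X v) N) :
    (nodeGraph k (insert v V) (attachEdges E X v)).Reachable M N := by
  have hvX : v ∉ X := fun h => hv (hXV h)
  have hXnode : IsNode k V E X := ⟨hXV, hclique, Or.inl hX⟩
  have hA := isNode_insert_attach hXV hX hclique hv
  have hAX : (nodeGraph k (insert v V) (attachEdges E X v)).Adj (insert v X) X :=
    ⟨hA, hXnode.attach, Or.inr (Finset.ssubset_insert hvX)⟩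
  suffices hreach : ∀ M, IsNode k (insert v V) (attachEdges E X v) M →
      (nodeGraph k (insert v V) (attachEdges E X v)).Reachable M X from
    (hreach M hM).trans (hreach N hN).symm
  intro M hM
  by_cases hvM : v ∈ M
  · rcases hM.2.2 with hc | hc
    · have hMA : M ⊂ insert v X := (hM.subset_insert_of_attach hvE hvM).ssubset_of_ne
        fun hMA => by rw [hMA, Finset.card_insert_of_notMem hvX] at hc; omega
      have hMA' : (nodeGraph k (insert v V) (attachEdges E X v)).Adj M (insert v X) :=
        ⟨hM, hA, Or.inl hMA⟩
      exact hMA'.reachable.trans hAX.reachable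
    · exact hM.eq_insert_of_attach hvE hX hvM hc ▸ hAX.reachable
  · exact (h (hM.of_attach hvM) hXnode).mono nodeGraph_le_attach

end Attach

namespace IsKTree

variable {k : ℕ} {V : Finset ℕ} {E : Finset (Sym2 ℕ)}

lemma exists_isNode (h : IsKTree k V E) : ∃ M, IsNode k V E M := by
  induction h with
  | base V hV => exact ⟨V, subset_rfl, isCliqueIn_cliqueEdges V, Or.inl hV⟩
  | extend V E X v _ _ _ _ _ ih => exact ih.imp fun _ hM => hM.attach

lemma isAcyclic_nodeGraph (h : IsKTree k V E) : (nodeGraph k V E).IsAcyclic := by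
  induction h with
  | base V hV => exact nodeGraph_eq_bot_of_card_eq hV ▸ isAcyclic_bot
  | extend V E X v ht _ hX _ hv ih =>
    exact isAcyclic_nodeGraph_attach (fun _ he hve => hv (ht.mem_of_mem_edge he hve)) hX ih

lemma reachable_nodeGraph (h : IsKTree k V E) {M N : Finset ℕ} (hM : IsNode k V E M)
    (hN : IsNode k V E N) : (nodeGraph k V E).Reachable M N := by
  induction h generalizing M N with
  | base V hV => rw [eq_of_isNode_of_card_eq hV hM, eq_of_isNode_of_card_eq hV hN]
  | extend V E X v ht hXV hX hclique hv ih =>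
    exact reachable_nodeGraph_attach (fun _ he hve => hv (ht.mem_of_mem_edge he hve)) hXV hX
      hclique hv ih hM hN

end IsKTree

/-- The tree representation `T(G)` of a `k`-tree `G` is a tree. -/
theorem treeRep_isTree (k : ℕ) (V : Finset ℕ) (E : Finset (Sym2 ℕ))
    (h : IsKTree k V E) : (treeRep k V E).IsTree :=
  ⟨treeRep_connected h.exists_isNode h.reachable_nodeGraph,
    treeRep_isAcyclic h.isAcyclic_nodeGraph⟩
end

section
/- In a k-path, no two spikes are adjacent, and every spike is adjacent to exactly the k vertices of one of the current cliques X_i of the construction. -/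
/-- Inductive definition of a `k`-path with vertex set `V`, edge set `E`, and
list of current cliques `Xs` (most recent first): a new vertex is always
joined to the current clique (head of the list); afterwards the current
clique either stays the same (the new vertex is a spike) or is updated by
replacing one of its vertices with the new vertex. -/
inductive IsKPath (k : ℕ) : Finset ℕ → Finset (Sym2 ℕ) → List (Finset ℕ) → Prop where
  | base (V : Finset ℕ) (h : V.card = k) : IsKPath k V (cliqueEdges V) [V]
  | spike (V : Finset ℕ) (E : Finset (Sym2 ℕ)) (X : Finset ℕ) (Xs : List (Finset ℕ)) (v : ℕ)
      (ht : IsKPath k V E (X :: Xs)) (hv : v ∉ V) :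
      IsKPath k (insert v V) (E ∪ X.image (fun x => s(x, v))) (X :: Xs)
  | shift (V : Finset ℕ) (E : Finset (Sym2 ℕ)) (X : Finset ℕ) (Xs : List (Finset ℕ)) (v u : ℕ)
      (ht : IsKPath k V E (X :: Xs)) (hv : v ∉ V) (hu : u ∈ X) :
      IsKPath k (insert v V) (E ∪ X.image (fun x => s(x, v)))
        ((insert v (X.erase u)) :: X :: Xs)

/-- A spike of a `k`-path: a vertex not belonging to any current clique. -/
def IsSpike (V : Finset ℕ) (Xs : List (Finset ℕ)) (v : ℕ) : Prop :=
  v ∈ V ∧ ∀ X ∈ Xs, v ∉ X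

/-! A spike `w` is adjacent exactly to the clique `X` that was current when `w` was added: every
later vertex is joined only to the then current clique, and no current clique ever contains `w`.
Since that clique is itself current, no neighbour of a spike is a spike. -/

section Extension

variable {α : Type*} [DecidableEq α] {V X : Finset α} {E : Finset (Sym2 α)}

lemma mem_union_image_iff_of_ne {v a w : α} (hwv : w ≠ v) (hwX : w ∉ X) :
    s(a, w) ∈ E ∪ X.image (fun x => s(x, v)) ↔ s(a, w) ∈ E := by
  simp only [Finset.mem_union, Finset.mem_image, Sym2.eq_iff, or_iff_left_iff_imp]
  rintro ⟨x, hx, ⟨rfl, rfl⟩ | ⟨rfl, -⟩⟩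
  exacts [absurd rfl hwv, absurd hx hwX]

lemma mem_union_image_iff_of_notMem {v a : α} (hE : E ⊆ V.sym2) (hXV : X ⊆ V) (hv : v ∉ V) :
    s(a, v) ∈ E ∪ X.image (fun x => s(x, v)) ↔ a ∈ X := by
  have hvE : s(a, v) ∉ E := fun he => hv (Finset.mk_mem_sym2_iff.mp (hE he)).2
  simp only [Finset.mem_union, hvE, false_or, Finset.mem_image, Sym2.eq_iff]
  constructor
  · rintro ⟨x, hx, ⟨rfl, -⟩ | ⟨rfl, -⟩⟩
    exacts [hx, absurd (hXV hx) hv]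
  · exact fun ha => ⟨a, ha, Or.inl ⟨rfl, trivial⟩⟩

lemma union_image_subset_sym2 {v : α} (hE : E ⊆ V.sym2) (hXV : X ⊆ V) :
    E ∪ X.image (fun x => s(x, v)) ⊆ (insert v V).sym2 := by
  refine Finset.union_subset (hE.trans (Finset.sym2_mono (Finset.subset_insert v V))) ?_
  rw [Finset.image_subset_iff]
  exact fun x hx => Finset.mk_mem_sym2_iff.mpr
    ⟨Finset.mem_insert_of_mem (hXV hx), Finset.mem_insert_self v V⟩

end Extension

namespace IsKPath

variable {k : ℕ} {V : Finset ℕ} {E : Finset (Sym2 ℕ)} {Xs : List (Finset ℕ)}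

lemma subset_of_mem (h : IsKPath k V E Xs) {X : Finset ℕ} (hX : X ∈ Xs) : X ⊆ V := by
  induction h generalizing X with
  | base V _ => rw [List.mem_singleton.mp hX]
  | spike V E Y Ys v _ _ ih => exact (ih hX).trans (Finset.subset_insert v V)
  | shift V E Y Ys v u _ _ _ ih =>
    rcases List.mem_cons.mp hX with rfl | hX
    · exact Finset.insert_subset_insert v ((Finset.erase_subset u Y).trans (ih List.mem_cons_self))
    · exact (ih hX).trans (Finset.subset_insert v V)

lemma card_eq_of_mem (h : IsKPath k V E Xs) {X : Finset ℕ} (hX : X ∈ Xs) : X.card = k := by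
  induction h generalizing X with
  | base V hV => rw [List.mem_singleton.mp hX, hV]
  | spike V E Y Ys v _ _ ih => exact ih hX
  | shift V E Y Ys v u ht hv hu ih =>
    rcases List.mem_cons.mp hX with rfl | hX
    · have hvY : v ∉ Y.erase u :=
        fun hvY => hv (ht.subset_of_mem List.mem_cons_self (Finset.mem_of_mem_erase hvY))
      rw [Finset.card_insert_of_notMem hvY, Finset.card_erase_add_one hu, ih List.mem_cons_self]
    · exact ih hX

lemma edges_subset_sym2 (h : IsKPath k V E Xs) : E ⊆ V.sym2 := by
  induction h with
  | base V _ =>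
    intro e he
    obtain ⟨⟨a, b⟩, hab, rfl⟩ := Finset.mem_image.mp he
    exact Finset.mk_mem_sym2_iff.mpr (Finset.mem_product.mp (Finset.mem_filter.mp hab).1)
  | spike V E X Xs v ht _ ih =>
    exact union_image_subset_sym2 ih (ht.subset_of_mem List.mem_cons_self)
  | shift V E X Xs v u ht _ _ ih =>
    exact union_image_subset_sym2 ih (ht.subset_of_mem List.mem_cons_self)

lemma exists_clique_of_isSpike (h : IsKPath k V E Xs) {w : ℕ} (hw : IsSpike V Xs w) :
    ∃ X ∈ Xs, X.card = k ∧ ∀ u : ℕ, u ≠ w → (s(u, w) ∈ E ↔ u ∈ X) := by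
  induction h generalizing w with
  | base V _ => exact absurd hw.1 (hw.2 V (List.mem_singleton_self V))
  | spike V E X Xs v ht hv ih =>
    obtain ⟨hwV, hwXs⟩ := hw
    rcases Finset.mem_insert.mp hwV with rfl | hwV
    · refine ⟨X, List.mem_cons_self, ht.card_eq_of_mem List.mem_cons_self, fun u _ => ?_⟩
      exact mem_union_image_iff_of_notMem ht.edges_subset_sym2
        (ht.subset_of_mem List.mem_cons_self) hv
    · obtain ⟨Y, hY, hYk, hN⟩ := ih ⟨hwV, hwXs⟩
      refine ⟨Y, hY, hYk, fun u hu => ?_⟩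
      exact (mem_union_image_iff_of_ne (ne_of_mem_of_not_mem hwV hv)
        (hwXs X List.mem_cons_self)).trans (hN u hu)
  | shift V E X Xs v u ht hv hu ih =>
    obtain ⟨hwV, hwXs⟩ := hw
    have hwv : w ≠ v := fun hwv => hwXs _ List.mem_cons_self (hwv ▸ Finset.mem_insert_self _ _)
    have hwV : w ∈ V := (Finset.mem_insert.mp hwV).resolve_left hwv
    obtain ⟨Y, hY, hYk, hN⟩ := ih ⟨hwV, fun Y hY => hwXs Y (List.mem_cons_of_mem _ hY)⟩
    refine ⟨Y, List.mem_cons_of_mem _ hY, hYk, fun u hu => ?_⟩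
    exact (mem_union_image_iff_of_ne hwv
      (hwXs X (List.mem_cons_of_mem _ List.mem_cons_self))).trans (hN u hu)

end IsKPath

/-- In a `k`-path, no two spikes are adjacent, and every spike is adjacent to
exactly the `k` vertices of one of the current cliques. -/
theorem kpath_spikes (k : ℕ) (V : Finset ℕ) (E : Finset (Sym2 ℕ))
    (Xs : List (Finset ℕ)) (h : IsKPath k V E Xs) :
    (∀ u v : ℕ, IsSpike V Xs u → IsSpike V Xs v → u ≠ v → s(u, v) ∉ E) ∧
    (∀ v : ℕ, IsSpike V Xs v →
      ∃ X ∈ Xs, X.card = k ∧ ∀ u : ℕ, u ≠ v → (s(u, v) ∈ E ↔ u ∈ X)) := by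
  refine ⟨fun u v hu hv huv huvE => ?_, fun v hv => h.exists_clique_of_isSpike hv⟩
  obtain ⟨X, hX, -, hN⟩ := h.exists_clique_of_isSpike hv
  exact hu.2 X hX ((hN u huv).mp huvE)
end

section
/- Let G be a graph and X a set of k vertices such that X separates G into parts A and B (every path from A to B passes through X). Then for any s ∈ A and t ∈ B, t is reachable from s in G if and only if there exist r ≤ k and vertices v₁,…,v_r ∈ X with v₀ = s, v_{r+1} = t such that for each even index x, v_{x+1} is reachable from v_x in the subgraph induced by A ∪ X, and for each odd index x, v_{x+1} is reachable from v_x in the subgraph induced by B ∪ X (or the symmetric alternation). -/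
/-- Reachability in the directed graph with edge set `E`, using only vertices
of `W`. -/
def DReach (E : Finset (ℕ × ℕ)) (W : Finset ℕ) (a b : ℕ) : Prop :=
  Relation.ReflTransGen (fun x y => x ∈ W ∧ y ∈ W ∧ (x, y) ∈ E) a b

/-!
A path from `s` to `t` is cut at the vertices where it passes from one side to the other. Each
such vertex is an endpoint of an edge of each side, hence lies in `(A ∪ X) ∩ (B ∪ X) = X`.
Shortcutting the path between repeated cut vertices makes them distinct, so there are at most
`|X|` of them.
-/

open Relation

namespace DReach

variable {E : Finset (ℕ × ℕ)} {W W' : Finset ℕ} {a b : ℕ}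

theorem mono (hW : W ⊆ W') (h : DReach E W a b) : DReach E W' a b :=
  ReflTransGen.mono (fun _ _ ⟨hx, hy, he⟩ => ⟨hW hx, hW hy, he⟩) _ _ h

theorem reflTransGen_edges (h : DReach E W a b) : ReflTransGen (fun x y => (x, y) ∈ E) a b :=
  ReflTransGen.mono (fun _ _ h => h.2.2) _ _ h

end DReach

def AlternatingReach (E : Finset (ℕ × ℕ)) : Finset ℕ → Finset ℕ → ℕ → List ℕ → ℕ → Prop
  | S, _, a, [], t => DReach E S a t
  | S, T, a, x :: xs, t => DReach E S a x ∧ AlternatingReach E T S x xs t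

namespace AlternatingReach

variable {E : Finset (ℕ × ℕ)} {S T : Finset ℕ} {a b t : ℕ} {xs : List ℕ}

theorem head (hab : DReach E S a b) (h : AlternatingReach E S T b xs t) :
    AlternatingReach E S T a xs t := by
  cases xs with
  | nil => exact hab.trans h
  | cons x xs => exact ⟨hab.trans h.1, h.2⟩

theorem of_append_cons {u : ℕ} {zs : List ℕ} :
    ∀ {S T : Finset ℕ} {a : ℕ} (ys : List ℕ), AlternatingReach E S T a (ys ++ u :: zs) t →
      AlternatingReach E S T u zs t ∨ AlternatingReach E T S u zs t
  | _, _, _, [], h => Or.inr h.2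
  | _, _, _, _ :: ys, h => (of_append_cons ys h.2).symm

theorem getD_even_odd (h : AlternatingReach E S T a xs t) :
    ∀ i ≤ xs.length,
      (Even i → DReach E S ((a :: xs).getD i t) ((a :: xs).getD (i + 1) t)) ∧
      (¬ Even i → DReach E T ((a :: xs).getD i t) ((a :: xs).getD (i + 1) t)) := by
  induction xs generalizing S T a with
  | nil =>
    intro i hi
    obtain rfl : i = 0 := by simpa using hi
    exact ⟨fun _ => h, fun h0 => absurd Even.zero h0⟩
  | cons x xs ih =>
    rintro (_ | i) hi
    · exact ⟨fun _ => h.1, fun h0 => absurd Even.zero h0⟩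
    · obtain ⟨hT, hS⟩ := ih h.2 i (by simpa using hi)
      simpa [Nat.even_add_one] using And.intro hS hT

end AlternatingReach

section Separation

variable {E : Finset (ℕ × ℕ)} {S T : Finset ℕ} {t : ℕ}

def NodupAlternatingReach (E : Finset (ℕ × ℕ)) (S T : Finset ℕ) (u t : ℕ) : Prop :=
  ∃ xs : List ℕ, xs.Nodup ∧ (∀ x ∈ xs, x ∈ S ∩ T) ∧ AlternatingReach E S T u xs t

theorem NodupAlternatingReach.swap {u : ℕ} (hu : u ∈ S ∩ T)
    (h : NodupAlternatingReach E T S u t) : NodupAlternatingReach E S T u t := by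
  obtain ⟨xs, hnd, hST, hreach⟩ := h
  have hST' : ∀ x ∈ xs, x ∈ S ∩ T := fun x hx => Finset.inter_comm T S ▸ hST x hx
  by_cases hux : u ∈ xs
  · obtain ⟨ys, zs, rfl⟩ := List.append_of_mem hux
    have hzs : (u :: zs).Nodup := (List.nodup_append.mp hnd).2.1
    have hzsST : ∀ x ∈ u :: zs, x ∈ S ∩ T := fun x hx => hST' x (List.mem_append_right ys hx)
    rcases hreach.of_append_cons ys with h | h
    · exact ⟨u :: zs, hzs, hzsST, ReflTransGen.refl, h⟩
    · exact ⟨zs, hzs.of_cons, fun x hx => hzsST x (.tail _ hx), h⟩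
  · refine ⟨u :: xs, List.nodup_cons.mpr ⟨hux, hnd⟩, ?_, ReflTransGen.refl, hreach⟩
    exact List.forall_mem_cons.mpr ⟨hu, hST'⟩

theorem nodupAlternatingReach_of_reflTransGen
    (hE : ∀ e ∈ E, (e.1 ∈ S ∧ e.2 ∈ S) ∨ (e.1 ∈ T ∧ e.2 ∈ T)) {u : ℕ}
    (h : ReflTransGen (fun x y => (x, y) ∈ E) u t) (hu : u ∈ S) :
    NodupAlternatingReach E S T u t := by
  induction h using ReflTransGen.head_induction_on generalizing S T with
  | refl => exact ⟨[], List.nodup_nil, by simp, ReflTransGen.refl⟩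
  | @head u w huw _ ih =>
    by_cases hw : w ∈ S
    · obtain ⟨xs, hnd, hST, hreach⟩ := ih hE hw
      exact ⟨xs, hnd, hST, hreach.head (.single ⟨hu, hw, huw⟩)⟩
    · obtain ⟨huT, hwT⟩ := (hE _ huw).resolve_left (fun h => hw h.2)
      obtain ⟨xs, hnd, hST, hreach⟩ := ih (fun e he => (hE e he).symm) hwT
      exact NodupAlternatingReach.swap (Finset.mem_inter.mpr ⟨hu, huT⟩)
        ⟨xs, hnd, hST, hreach.head (.single ⟨huT, hwT, huw⟩)⟩

end Separation

theorem separator_reachability_general (k : ℕ) (A B X : Finset ℕ) (E : Finset (ℕ × ℕ))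
    (hX : X.card = k)
    (hAB : Disjoint A B)
    (hE : ∀ e ∈ E, (e.1 ∈ A ∪ X ∧ e.2 ∈ A ∪ X) ∨ (e.1 ∈ B ∪ X ∧ e.2 ∈ B ∪ X))
    (s t : ℕ) (hs : s ∈ A) :
    DReach E (A ∪ B ∪ X) s t ↔
      ∃ r ≤ k, ∃ v : ℕ → ℕ, v 0 = s ∧ v (r + 1) = t ∧
        (∀ x : ℕ, 1 ≤ x → x ≤ r → v x ∈ X) ∧
        ((∀ x ≤ r, (Even x → DReach E (A ∪ X) (v x) (v (x + 1))) ∧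
            (¬ Even x → DReach E (B ∪ X) (v x) (v (x + 1)))) ∨
         (∀ x ≤ r, (Even x → DReach E (B ∪ X) (v x) (v (x + 1))) ∧
            (¬ Even x → DReach E (A ∪ X) (v x) (v (x + 1))))) := by
  have hsides : (A ∪ X) ∩ (B ∪ X) ⊆ X := by
    rw [← Finset.inter_union_distrib_right, Finset.disjoint_iff_inter_eq_empty.mp hAB,
      Finset.empty_union]
  constructor
  · intro h
    obtain ⟨xs, hnd, hxs, hreach⟩ :=
      nodupAlternatingReach_of_reflTransGen hE h.reflTransGen_edges (Finset.mem_union_left X hs)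
    have hxsX : ∀ x ∈ xs, x ∈ X := fun x hx => hsides (hxs x hx)
    refine ⟨xs.length, ?_, fun i => (s :: xs).getD i t, rfl, by simp, ?_,
      Or.inl hreach.getD_even_odd⟩
    · rw [← hX, ← List.toFinset_card_of_nodup hnd]
      exact Finset.card_le_card fun x hx => hxsX x (List.mem_toFinset.mp hx)
    · rintro (_ | i) hi hir
      · omega
      · show (s :: xs).getD (i + 1) t ∈ X
        rw [List.getD_cons_succ, List.getD_eq_getElem _ _ (by omega)]
        exact hxsX _ (List.getElem_mem _)
  · rintro ⟨r, -, v, rfl, rfl, -, hlegs⟩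
    have hA : A ∪ X ⊆ A ∪ B ∪ X := by intro x; simp only [Finset.mem_union]; tauto
    have hB : B ∪ X ⊆ A ∪ B ∪ X := by intro x; simp only [Finset.mem_union]; tauto
    have hleg : ∀ i ∈ Set.Ico 0 (r + 1), DReach E (A ∪ B ∪ X) (v i) (v (i + 1)) := by
      rintro i ⟨-, hi⟩
      replace hi : i ≤ r := Nat.lt_succ_iff.mp hi
      by_cases hev : Even i <;> rcases hlegs with h | h
      exacts [((h i hi).1 hev).mono hA, ((h i hi).1 hev).mono hB,
        ((h i hi).2 hev).mono hB, ((h i hi).2 hev).mono hA]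
    exact (reflTransGen_of_succ_of_le _ hleg (Nat.zero_le _)).lift' v fun _ _ h => h

/-- If `X` (of size `k`) separates the directed graph into parts `A` and `B`
(every edge lies within `A ∪ X` or within `B ∪ X`), then for `s ∈ A`, `t ∈ B`,
`t` is reachable from `s` iff there are `r ≤ k` intermediate vertices
`v₁, …, v_r ∈ X` (with `v₀ = s`, `v_{r+1} = t`) such that the consecutive legs
are alternately realized inside `A ∪ X` and inside `B ∪ X` (or the symmetric
alternation). -/
theorem separator_reachability (k : ℕ) (A B X : Finset ℕ) (E : Finset (ℕ × ℕ))
    (hX : X.card = k)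
    (hAB : Disjoint A B) (hAX : Disjoint A X) (hBX : Disjoint B X)
    (hE : ∀ e ∈ E, (e.1 ∈ A ∪ X ∧ e.2 ∈ A ∪ X) ∨ (e.1 ∈ B ∪ X ∧ e.2 ∈ B ∪ X))
    (s t : ℕ) (hs : s ∈ A) (ht : t ∈ B) :
    DReach E (A ∪ B ∪ X) s t ↔
      ∃ r ≤ k, ∃ v : ℕ → ℕ, v 0 = s ∧ v (r + 1) = t ∧
        (∀ x : ℕ, 1 ≤ x → x ≤ r → v x ∈ X) ∧
        ((∀ x ≤ r, (Even x → DReach E (A ∪ X) (v x) (v (x + 1))) ∧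
            (¬ Even x → DReach E (B ∪ X) (v x) (v (x + 1)))) ∨
         (∀ x ≤ r, (Even x → DReach E (B ∪ X) (v x) (v (x + 1))) ∧
            (¬ Even x → DReach E (A ∪ X) (v x) (v (x + 1))))) :=
  separator_reachability_general k A B X E hX hAB hE s t hs
end

section
/- Every balanced parentheses string w of length n ≥ 4 can be written as a concatenation or decomposed so that there exist balanced substrings whose removal/retention splits w into three balanced parentheses strings, each of length at most (3/4)·n. -/
def BalancedStr (w : List Bool) : Prop :=
  (∀ p : List Bool, p <+: w → p.count false ≤ p.count true) ∧
  w.count true = w.count false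

namespace BalSplit

lemma prefix_append_cases {p u v : List Bool} (h : p <+: u ++ v) :
    p <+: u ∨ ∃ q, p = u ++ q ∧ q <+: v := by
  induction u generalizing p with
  | nil => exact Or.inr ⟨p, rfl, h⟩
  | cons a u ih =>
    rcases List.prefix_cons_iff.mp h with rfl | ⟨t, rfl, ht⟩
    · exact Or.inl (List.nil_prefix)
    · rcases ih ht with h1 | ⟨q, rfl, hq⟩
      · exact Or.inl (List.cons_prefix_cons.mpr ⟨rfl, h1⟩)
      · exact Or.inr ⟨q, rfl, hq⟩

lemma count_tf (w : List Bool) : w.count true + w.count false = w.length := by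
  induction w with
  | nil => simp
  | cons a l ih => cases a <;> simp [List.count_cons] <;> omega

lemma bal_nil : BalancedStr [] :=
  ⟨fun p hp => by simp [List.prefix_nil.mp hp], rfl⟩

lemma bal_even {w : List Bool} (hw : BalancedStr w) : w.length = 2 * w.count true := by
  have h1 := count_tf w; have h2 := hw.2; omega

lemma bal_append {u v : List Bool} (hu : BalancedStr u) (hv : BalancedStr v) :
    BalancedStr (u ++ v) := by
  constructor
  · intro p hp
    rcases prefix_append_cases hp with h1 | ⟨q, rfl, hq⟩
    · exact hu.1 p h1
    · have := hv.1 q hq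
      have := hu.2
      simp only [List.count_append]
      omega
  · have := hu.2; have := hv.2
    simp only [List.count_append]; omega

lemma bal_block {c : List Bool} (hc : BalancedStr c) :
    BalancedStr (true :: c ++ [false]) := by
  constructor
  · intro p hp
    rcases List.prefix_cons_iff.mp hp with rfl | ⟨t, rfl, ht⟩
    · simp
    · rcases prefix_append_cases ht with h1 | ⟨q, rfl, hq⟩
      · have := hc.1 t h1
        simp [List.count_cons]; omega
      · have := hc.2
        have hq' : q.count false ≤ 1 ∧ q.count true = 0 := by
          rcases List.prefix_cons_iff.mp hq with rfl | ⟨s, rfl, hs⟩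
          · simp
          · simp [List.prefix_nil.mp hs]
        simp [List.count_cons, List.count_append]; omega
  · have := hc.2
    simp [List.count_cons, List.count_append]; omega

lemma bal_insert {x z u : List Bool} (hxz : BalancedStr (x ++ z)) (hu : BalancedStr u) :
    BalancedStr (x ++ u ++ z) := by
  have hx : x.count false ≤ x.count true := hxz.1 x (List.prefix_append x z)
  constructor
  · intro p hp
    rw [List.append_assoc] at hp
    rcases prefix_append_cases hp with h1 | ⟨q, rfl, hq⟩
    · exact hxz.1 p (h1.trans (List.prefix_append x z))
    · rcases prefix_append_cases hq with h2 | ⟨r, rfl, hr⟩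
      · have := hu.1 q h2
        simp only [List.count_append]; omega
      · have h3 := hxz.1 (x ++ r) ((List.prefix_append_right_inj x).mpr hr)
        have := hu.2
        simp only [List.count_append] at *
        omega
  · have := hxz.2; have := hu.2
    simp only [List.count_append] at *
    omega

lemma bal_two_le {w : List Bool} (hw : BalancedStr w) (hne : w ≠ []) : 2 ≤ w.length := by
  have h1 := bal_even hw
  have h2 : w.length ≠ 0 := by simpa using hne
  omega

lemma bal_decomp {w : List Bool} (hw : BalancedStr w) (hne : w ≠ []) :
    ∃ c d : List Bool, w = true :: c ++ false :: d ∧ BalancedStr c ∧ BalancedStr d := by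
  classical
  obtain ⟨a, v, rfl⟩ : ∃ a v, w = a :: v := by
    cases w with
    | nil => exact absurd rfl hne
    | cons a v => exact ⟨a, v, rfl⟩
  have ha : a = true := by
    cases a
    · have := hw.1 [false] ⟨v, rfl⟩
      simp at this
    · rfl
  subst ha
  have hQ : ∃ k, 1 ≤ k ∧ k ≤ (true :: v).length ∧
      ((true :: v).take k).count true = ((true :: v).take k).count false := by
    refine ⟨(true :: v).length, by simp, le_refl _, ?_⟩
    simpa using hw.2
  obtain ⟨k, ⟨hk1, hkle, hkeq⟩, hkmin⟩ :
      ∃ k, (1 ≤ k ∧ k ≤ (true :: v).length ∧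
        ((true :: v).take k).count true = ((true :: v).take k).count false) ∧
      ∀ m, m < k → ¬(1 ≤ m ∧ m ≤ (true :: v).length ∧
        ((true :: v).take m).count true = ((true :: v).take m).count false) :=
    ⟨Nat.find hQ, Nat.find_spec hQ, fun m hm => Nat.find_min hQ hm⟩
  have hk2 : 2 ≤ k := by
    rcases Nat.lt_or_ge k 2 with h | h
    · exfalso
      have hk1' : k = 1 := by omega
      subst hk1'
      simp at hkeq
    · exact h
  obtain ⟨j, rfl⟩ : ∃ j, k = j + 1 := ⟨k - 1, by omega⟩
  have hjlt : j < (true :: v).length := by omega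
  have htakes : (true :: v).take (j+1) =
      (true :: v).take j ++ [(true :: v)[j]] := by
    rw [List.take_succ, List.getElem?_eq_getElem hjlt]
    rfl
  have hprefcount : ((true :: v).take j).count false ≤ ((true :: v).take j).count true :=
    hw.1 _ (List.take_prefix _ _)
  have hlast : (true :: v)[j] = false := by
    cases hv : (true :: v)[j] with
    | false => rfl
    | true =>
      exfalso
      rw [hv] at htakes
      rw [htakes] at hkeq
      simp [List.count_append] at hkeq
      omega
  rw [hlast] at htakes
  have hcnt1 : ((true :: v).take j).count true = ((true :: v).take j).count false + 1 := by
    rw [htakes] at hkeq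
    simp [List.count_append] at hkeq
    omega
  have hj1 : 1 ≤ j := by omega
  obtain ⟨i, rfl⟩ : ∃ i, j = i + 1 := ⟨j - 1, by omega⟩
  set c := v.take i with hcdef
  have hc : (true :: v).take (i+1) = true :: c := by
    simp [hcdef]
  refine ⟨c, (true :: v).drop (i+1+1), ?_, ?_, ?_⟩
  · conv_lhs => rw [← List.take_append_drop (i+1+1) (true :: v)]
    rw [htakes, hc]
    simp
  · constructor
    · intro p hp
      by_contra hcon
      push_neg at hcon
      have hpre : (true :: p) <+: (true :: v) := by
        have h1 : (true :: p) <+: (true :: c) := List.cons_prefix_cons.mpr ⟨rfl, hp⟩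
        rw [← hc] at h1
        exact h1.trans (List.take_prefix _ _)
      have hple := hw.1 (true :: p) hpre
      simp [List.count_cons] at hple
      have heq : p.count false = p.count true + 1 := by omega
      have htk : (true :: v).take (p.length + 1) = true :: p := by
        have h2 := List.prefix_iff_eq_take.mp hpre
        simpa using h2.symm
      have hlenp : p.length ≤ c.length := hp.length_le
      have hcl : c.length ≤ i := by simp [hcdef]
      have hlt : p.length + 1 < i + 2 := by
        have h9 := hlenp.trans hcl
        omega
      have h4 := hkmin (p.length + 1) hlt
      rw [htk] at h4
      have hple2 : p.length + 1 ≤ (true :: v).length := by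
        have h9 := hlenp.trans hcl
        simp only [List.length_cons]
        simp only [List.length_cons] at hjlt
        omega
      have h5 : ¬((true :: p).count true = (true :: p).count false) :=
        fun hcc => h4 ⟨by omega, hple2, hcc⟩
      simp [List.count_cons] at h5
      omega
    · rw [hc] at hcnt1
      simp [List.count_cons] at hcnt1
      omega
  · constructor
    · intro p hp
      have hpre : ((true :: v).take (i+1+1) ++ p) <+: (true :: v) := by
        conv_rhs => rw [← List.take_append_drop (i+1+1) (true :: v)]
        exact (List.prefix_append_right_inj _).mpr hp
      have h2 := hw.1 _ hpre
      simp only [List.count_append] at h2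
      omega
    · have htot := hw.2
      conv_lhs at htot => rw [← List.take_append_drop (i+1+1) (true :: v)]
      conv_rhs at htot => rw [← List.take_append_drop (i+1+1) (true :: v)]
      simp only [List.count_append] at htot
      omega

lemma step (n : ℕ) : ∀ w : List Bool, w.length ≤ n → BalancedStr w →
    ∀ t : ℕ, Even t → 2 ≤ t → t + 2 ≤ 2 * w.length →
    ∃ x y z : List Bool, w = x ++ y ++ z ∧ BalancedStr y ∧ BalancedStr (x ++ z) ∧
      y.length + 2 ≤ w.length ∧
      ((x = [] ∧ t ≤ 2 * y.length) ∨ 2 * w.length ≤ 2 * y.length + 2 + t) := by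
  induction n with
  | zero =>
    intro w hlen hw t hev h2t htle
    omega
  | succ n IH =>
    intro w hlen hw t hev h2t htle
    have hne : w ≠ [] := by
      intro h; subst h; simp only [List.length_nil] at htle; omega
    obtain ⟨c, d, hwcd, hc, hd⟩ := bal_decomp hw hne
    have hlenw : w.length = c.length + d.length + 2 := by
      subst hwcd; simp; omega
    by_cases h1 : t ≤ 2 * (c.length + 2)
    · by_cases hd0 : d = []
      · subst hd0
        simp only [List.length_nil] at hlenw
        refine ⟨[true], c, [false], ?_, hc, ?_, by omega, Or.inr (by omega)⟩
        · rw [hwcd]; simp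
        · simpa using bal_block bal_nil
      · refine ⟨[], true :: c ++ [false], d, by simp [hwcd], bal_block hc,
          by simpa using hd, ?_, Or.inl ⟨rfl, ?_⟩⟩
        · have hd2 := bal_two_le hd hd0
          simp; omega
        · simp; omega
    · push_neg at h1
      have hd0 : d ≠ [] := by
        intro h; subst h; simp at hlenw; omega
      obtain ⟨r, hr⟩ := hev
      have hdn : d.length ≤ n := by omega
      have hev' : Even (t - 2 * (c.length + 2)) := ⟨r - (c.length + 2), by omega⟩
      have h2t' : 2 ≤ t - 2 * (c.length + 2) := by omega
      have htle' : (t - 2 * (c.length + 2)) + 2 ≤ 2 * d.length := by omega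
      obtain ⟨x', y', z', hd', hy', hxz', hylen, hdisj⟩ :=
        IH d hdn hd (t - 2 * (c.length + 2)) hev' h2t' htle'
      rcases hdisj with ⟨hx0, hty⟩ | hbound
      · subst hx0
        simp at hd'
        refine ⟨[], true :: c ++ [false] ++ y', z', ?_, ?_, by simpa using hxz', ?_,
          Or.inl ⟨rfl, ?_⟩⟩
        · simp [hwcd, hd']
        · have := bal_append (bal_block hc) hy'
          simpa [List.append_assoc] using this
        · simp; omega
        · simp; omega
      · refine ⟨true :: c ++ [false] ++ x', y', z', ?_, hy', ?_, by omega, Or.inr ?_⟩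
        · simp [hwcd, hd', List.append_assoc]
        · have := bal_append (bal_block hc) hxz'
          simpa [List.append_assoc] using this
        · omega

lemma chain (n : ℕ) : ∀ w : List Bool, w.length ≤ n → BalancedStr w →
    ∀ m : ℕ, 1 ≤ m → 2 * m ≤ w.length →
    ∃ x y z : List Bool, w = x ++ y ++ z ∧ BalancedStr y ∧ BalancedStr (x ++ z) ∧
      m ≤ y.length ∧ y.length ≤ 2 * m := by
  induction n with
  | zero => intro w hlen hw m hm hmw; omega
  | succ n IH =>
    intro w hlen hw m hm hmw
    by_cases h : w.length ≤ 2 * m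
    · exact ⟨[], w, [], by simp, hw, by simpa using (bal_nil : BalancedStr []), by omega, by omega⟩
    · push_neg at h
      have hev := bal_even hw
      obtain ⟨x, y, z, hsplit, hy, hxz, hylen, hdisj⟩ :=
        step w.length w (le_refl _) hw w.length ⟨w.count true, by omega⟩ (by omega) (by omega)
      have hlow : w.length ≤ 2 * y.length + 2 := by
        rcases hdisj with ⟨_, h2⟩ | h2 <;> omega
      have hym : m ≤ y.length := by omega
      by_cases h2 : y.length ≤ 2 * m
      · exact ⟨x, y, z, hsplit, hy, hxz, hym, h2⟩
      · push_neg at h2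
        have hyn : y.length ≤ n := by omega
        obtain ⟨x2, y2, z2, hs2, hy2, hxz2, hm2, hM2⟩ := IH y hyn hy m hm (by omega)
        refine ⟨x ++ x2, y2, z2 ++ z, ?_, hy2, ?_, hm2, hM2⟩
        · rw [hsplit, hs2]; simp [List.append_assoc]
        · have := bal_insert hxz hxz2
          simpa [List.append_assoc] using this

end BalSplit

/-- Every balanced parentheses string of length `n ≥ 4` can be decomposed as
`w = x ++ y ++ z` where either `x`, `y`, `z` are all balanced, or the balanced
contiguous substring `y` is extracted leaving `x ++ z` balanced, so that `w`
splits into three balanced strings each of length at most `(3/4)·n`. -/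
theorem balanced_string_split (w : List Bool) (hw : BalancedStr w)
    (hn : 4 ≤ w.length) :
    ∃ x y z : List Bool, w = x ++ y ++ z ∧
      ((BalancedStr x ∧ BalancedStr y ∧ BalancedStr z ∧
          4 * x.length ≤ 3 * w.length ∧ 4 * y.length ≤ 3 * w.length ∧
          4 * z.length ≤ 3 * w.length) ∨
       (BalancedStr y ∧ BalancedStr (x ++ z) ∧
          4 * y.length ≤ 3 * w.length ∧ 4 * (x ++ z).length ≤ 3 * w.length)) := by
  have hev := BalSplit.bal_even hw
  obtain ⟨x, y, z, hsplit, hy, hxz, hym, hyM⟩ :=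
    BalSplit.chain w.length w (le_refl _) hw ((w.count true + 1) / 2) (by omega) (by omega)
  have hxyz : w.length = x.length + y.length + z.length := by
    rw [hsplit]; simp; omega
  refine ⟨x, y, z, hsplit, Or.inr ⟨hy, hxz, by omega, ?_⟩⟩
  simp only [List.length_append]
  omega
end

section
/- Let G be an undirected k-tree with a layer decomposition in which layer 0 is a k-clique containing t, each vertex in layer i > 0 has exactly k neighbors in lower layers forming a k-clique, and no two vertices in the same layer are adjacent. Then no shortest path from s to t contains two consecutive vertices u, v (in order from s to t) with layer(u) < layer(v). -/
/-- A layer decomposition of the (undirected) graph `(V, E)` with respect to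
the target vertex `t`: layer `0` is a `k`-clique containing `t`; each vertex
in a layer `i > 0` has exactly `k` neighbours in strictly lower layers, and
these form a `k`-clique; no two vertices in the same layer are adjacent. -/
def LayerDecomp (k : ℕ) (V : Finset ℕ) (E : Finset (Sym2 ℕ))
    (layer : ℕ → ℕ) (t : ℕ) : Prop :=
  t ∈ V ∧ layer t = 0 ∧
  (V.filter (fun v => layer v = 0)).card = k ∧
  IsCliqueIn E (V.filter (fun v => layer v = 0)) ∧
  (∀ v ∈ V, 0 < layer v →
    (V.filter (fun u => s(u, v) ∈ E ∧ layer u < layer v)).card = k ∧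
    IsCliqueIn E (V.filter (fun u => s(u, v) ∈ E ∧ layer u < layer v))) ∧
  (∀ u ∈ V, ∀ v ∈ V, s(u, v) ∈ E → layer u ≠ layer v)

/-- A walk from `s` to `t` in the graph `(V, E)`, as a list of vertices. -/
def IsWalk (V : Finset ℕ) (E : Finset (Sym2 ℕ)) (s t : ℕ) (p : List ℕ) : Prop :=
  p.head? = some s ∧ p.getLast? = some t ∧ (∀ v ∈ p, v ∈ V) ∧
  p.Chain' (fun a b => s(a, b) ∈ E)

/-- A shortest path from `s` to `t`: a walk of minimum length. -/
def IsShortestPath (V : Finset ℕ) (E : Finset (Sym2 ℕ)) (s t : ℕ)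
    (p : List ℕ) : Prop :=
  IsWalk V E s t p ∧ ∀ q : List ℕ, IsWalk V E s t q → p.length ≤ q.length

/-! If a shortest path climbed from one layer to a higher one, then, since it ends in layer `0`
and consecutive vertices lie in different layers, it would contain a strict peak `x, y, z` with
`layer x < layer y > layer z`. Then `x` and `z` are both lower neighbours of `y`, and these form a
clique, so `x = z` or `xz` is an edge; either way `y` can be cut out of the path. -/

section Walks

variable {V : Finset ℕ} {E : Finset (Sym2 ℕ)} {s t u w : ℕ}

theorem IsWalk.of_append_cons {a b : List ℕ} (hw : IsWalk V E s t (a ++ u :: b)) :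
    IsWalk V E u t (u :: b) := by
  obtain ⟨-, hlast, hmem, hchain⟩ := hw
  refine ⟨rfl, ?_, fun x hx => hmem x (by simp_all), hchain.right_of_append⟩
  rwa [List.getLast?_append_cons] at hlast

theorem IsWalk.cons {r : List ℕ} (hw : IsWalk V E w t (w :: r)) (hu : u ∈ V)
    (he : s(u, w) ∈ E) : IsWalk V E u t (u :: w :: r) := by
  obtain ⟨-, hlast, hmem, hchain⟩ := hw
  refine ⟨rfl, ?_, ?_, hchain.cons (by simpa using he)⟩
  · rwa [List.getLast?_cons_cons]
  · simpa [hu] using hmem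

theorem IsWalk.replace_tail {a b c : List ℕ} (hw : IsWalk V E s t (a ++ u :: b))
    (hu : IsWalk V E u t (u :: c)) : IsWalk V E s t (a ++ u :: c) := by
  obtain ⟨hhead, -, hmem, hchain⟩ := hw
  obtain ⟨-, hlast, hmem', hchain'⟩ := hu
  refine ⟨by cases a <;> simp_all, by rwa [List.getLast?_append_cons], ?_, ?_⟩
  · intro x hx
    rcases List.mem_append.1 hx with hx | hx
    exacts [hmem x (List.mem_append_left _ hx), hmem' x hx]
  · exact hchain.left_of_append.append hchain' (List.isChain_append.1 hchain).2.2

theorem IsShortestPath.no_shortcut {a r : List ℕ} {v : ℕ}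
    (hp : IsShortestPath V E s t (a ++ u :: v :: w :: r)) : u ≠ w ∧ s(u, w) ∉ E := by
  obtain ⟨hw, hmin⟩ := hp
  have hwr : IsWalk V E w t (w :: r) :=
    IsWalk.of_append_cons (a := a ++ [u, v]) (by simpa using hw)
  constructor
  · rintro rfl
    have := hmin _ (hw.replace_tail hwr)
    simp at this
  · intro he
    have hu : u ∈ V := hw.2.2.1 u (by simp)
    have := hmin _ (hw.replace_tail (hwr.cons hu he))
    simp at this

end Walks

theorem List.exists_peak {α β : Type*} [LinearOrder β] (f : α → β) :
    ∀ (l : List α) (x y : α), f x < f y → (y :: l).IsChain (fun a b => f a ≠ f b) →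
      f ((y :: l).getLast (List.cons_ne_nil _ _)) < f y →
      ∃ a u v w r, x :: y :: l = a ++ u :: v :: w :: r ∧ f u < f v ∧ f w < f v
  | [], _, _, _, _, hlast => absurd hlast (lt_irrefl _)
  | z :: l, x, y, hxy, hchain, hlast => by
    rcases (List.isChain_cons_cons.1 hchain).1.lt_or_gt with hyz | hzy
    · have hlast' : f ((z :: l).getLast (List.cons_ne_nil _ _)) < f z := by
        rw [List.getLast_cons_cons] at hlast
        exact hlast.trans hyz
      obtain ⟨a, u, v, w, r, hdec, huv, hwv⟩ :=
        exists_peak f l y z hyz (List.isChain_cons_cons.1 hchain).2 hlast'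
      exact ⟨x :: a, u, v, w, r, by rw [hdec]; rfl, huv, hwv⟩
    · exact ⟨[], x, y, z, l, rfl, hxy, hzy⟩

section Layers

variable {k : ℕ} {V : Finset ℕ} {E : Finset (Sym2 ℕ)} {layer : ℕ → ℕ} {t : ℕ}

theorem LayerDecomp.isChain_layer_ne (hlay : LayerDecomp k V E layer t) {s : ℕ} {p : List ℕ}
    (hw : IsWalk V E s t p) : p.IsChain (fun a b => layer a ≠ layer b) := by
  obtain ⟨-, -, -, -, -, hdiff⟩ := hlay
  obtain ⟨-, -, hmem, hchain⟩ := hw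
  exact hchain.imp_of_mem_imp fun a b ha hb he => hdiff a (hmem a ha) b (hmem b hb) he

theorem LayerDecomp.eq_or_mem_of_peak (hlay : LayerDecomp k V E layer t) {s u v w : ℕ}
    {a r : List ℕ} (hw : IsWalk V E s t (a ++ u :: v :: w :: r))
    (huv : layer u < layer v) (hwv : layer w < layer v) : u = w ∨ s(u, w) ∈ E := by
  obtain ⟨-, -, -, -, hlower_clique, -⟩ := hlay
  obtain ⟨-, -, hmem, hchain⟩ := hw
  have hedges : s(u, v) ∈ E ∧ s(v, w) ∈ E := by
    simpa using hchain.infix (l₁ := [u, v, w]) ⟨a, r, by simp⟩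
  have hlower : ∀ x ∈ [u, w], x ∈ V.filter (fun x => s(x, v) ∈ E ∧ layer x < layer v) := by
    simp_all [Sym2.eq_swap]
  have hclique := (hlower_clique v (hmem v (by simp)) (by omega)).2
  by_cases huw : u = w
  · exact .inl huw
  · exact .inr (hclique u (hlower u (by simp)) w (hlower w (by simp)) huw)

end Layers

/-- In a layered `k`-tree with `t` in layer `0`, no shortest `s`–`t` path
contains two consecutive vertices `u`, `v` (in order from `s` to `t`) with
`layer u < layer v`. -/
theorem shortest_path_layers_nonincreasing (k : ℕ) (V : Finset ℕ)
    (E : Finset (Sym2 ℕ))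
    (layer : ℕ → ℕ) (t : ℕ) (hlay : LayerDecomp k V E layer t)
    (s : ℕ) (p : List ℕ) (hp : IsShortestPath V E s t p) :
    ∀ i : ℕ, (hi : i + 1 < p.length) →
      ¬ layer (p.get ⟨i, by omega⟩) < layer (p.get ⟨i + 1, hi⟩) := by
  intro i hi hasc
  simp only [List.get_eq_getElem] at hasc
  have htail : p.drop (i + 1) = p[i + 1] :: p.drop (i + 2) := List.drop_eq_getElem_cons hi
  have hsplit : p = p.take i ++ p[i] :: p[i + 1] :: p.drop (i + 2) := by
    rw [← htail, ← List.drop_eq_getElem_cons, List.take_append_drop]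
  have hlast : (p.drop (i + 1)).getLast (by simp; omega) = t := by
    rw [List.getLast_drop, ← Option.some_inj, ← List.getLast?_eq_some_getLast, hp.1.2.1]
  obtain ⟨a, u, v, w, r, hpeak, huv, hwv⟩ := List.exists_peak layer _ _ _ hasc
    (htail ▸ (hlay.isChain_layer_ne hp.1).drop (i + 1))
    (by simp only [← htail, hlast, hlay.2.1]; omega)
  rw [hsplit, hpeak, ← List.append_assoc] at hp
  obtain ⟨hne, hnot⟩ := hp.no_shortcut
  exact (hlay.eq_or_mem_of_peak hp.1 huv hwv).elim hne hnot
end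

section
/- Let G be an undirected k-tree with a layer decomposition as above, with t in layer 0 and s in layer r > 0. Then there exists a shortest s–t path whose second vertex is a neighbor of s lying in the lowest layer among all neighbors of s. -/
/-! If `a` is adjacent to `b` and lies in a lower layer, then `dist(a, t) ≤ dist(b, t)`. By
induction on a walk from `b`: if its first step goes down, to `c`, then `a` and `c` both lie in the
lower clique of `b`, so `a` can step to `c` instead; if it goes up, to `c`, induction shortens the
walk to one from `b`, and induction applies again. Hence a lowest neighbour `v` of `s` is at most
as far from `t` as any neighbour `u`: either `u` lies above `s` and `v, s, u` descends, or `u` lies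
in the lower clique of `s` together with `v`. -/

section

variable {V : Finset ℕ} {E : Finset (Sym2 ℕ)} {t : ℕ}

namespace IsWalk

lemma head_mem {a : ℕ} {p : List ℕ} (h : IsWalk V E a t p) : a ∈ V :=
  h.2.2.1 a (List.mem_of_mem_head? h.1)

lemma eq_cons {a : ℕ} {p : List ℕ} (h : IsWalk V E a t p) : ∃ q, p = a :: q := by
  obtain ⟨hhead, -⟩ := h
  cases p with
  | nil => simp at hhead
  | cons b q => exact ⟨q, by simpa using hhead⟩

lemma cons_s13 {a b : ℕ} {q : List ℕ} (ha : a ∈ V) (hab : s(a, b) ∈ E) (hq : IsWalk V E b t q) :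
    IsWalk V E a t (a :: q) := by
  obtain ⟨q, rfl⟩ := hq.eq_cons
  obtain ⟨-, hlast, hmem, hchain⟩ := hq
  refine ⟨rfl, by rwa [List.getLast?_cons_cons], ?_, List.isChain_cons_cons.mpr ⟨hab, hchain⟩⟩
  simpa [ha] using hmem

lemma of_cons_cons {a b : ℕ} {q : List ℕ} (h : IsWalk V E a t (a :: b :: q)) :
    s(a, b) ∈ E ∧ IsWalk V E b t (b :: q) := by
  obtain ⟨-, hlast, hmem, hchain⟩ := h
  rw [List.getLast?_cons_cons] at hlast
  obtain ⟨hab, hchain⟩ := List.isChain_cons_cons.mp hchain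
  exact ⟨hab, rfl, hlast, fun x hx => hmem x (List.mem_cons_of_mem a hx), hchain⟩

lemma exists_eq_cons_cons {a : ℕ} {p : List ℕ} (h : IsWalk V E a t p) (hat : a ≠ t) :
    ∃ b q, p = a :: b :: q := by
  obtain ⟨hhead, hlast, -, -⟩ := h
  match p, hhead, hlast with
  | [_], rfl, hlast => exact absurd (by simpa using hlast) hat
  | _ :: b :: q, rfl, _ => exact ⟨b, q, rfl⟩

end IsWalk

lemma exists_isShortestPath {s : ℕ} (h : ∃ q, IsWalk V E s t q) :
    ∃ p, IsShortestPath V E s t p := by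
  classical
  have hlen : ∃ n, ∃ p, IsWalk V E s t p ∧ p.length = n :=
    let ⟨q, hq⟩ := h; ⟨q.length, q, hq, rfl⟩
  obtain ⟨p, hp, hpn⟩ := Nat.find_spec hlen
  exact ⟨p, hp, fun q hq => hpn ▸ Nat.find_min' hlen ⟨q, hq, rfl⟩⟩

lemma IsShortestPath.of_length_le {s : ℕ} {p p' : List ℕ} (hp : IsShortestPath V E s t p)
    (hp' : IsWalk V E s t p') (hlen : p'.length ≤ p.length) : IsShortestPath V E s t p' :=
  ⟨hp', fun q hq => hlen.trans (hp.2 q hq)⟩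

namespace LayerDecomp

variable {k : ℕ} {layer : ℕ → ℕ}

lemma layer_ne (hlay : LayerDecomp k V E layer t) {u v : ℕ} (hu : u ∈ V) (hv : v ∈ V)
    (huv : s(u, v) ∈ E) : layer u ≠ layer v :=
  hlay.2.2.2.2.2 u hu v hv huv

lemma ne_of_layer_pos (hlay : LayerDecomp k V E layer t) {v : ℕ} (hv : 0 < layer v) :
    v ≠ t := by
  rintro rfl
  exact hv.ne' hlay.2.1

lemma adj_of_lower_neighbors (hlay : LayerDecomp k V E layer t) {a b c : ℕ} (hb : b ∈ V)
    (ha : a ∈ V) (hab : s(a, b) ∈ E) (hla : layer a < layer b)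
    (hc : c ∈ V) (hcb : s(c, b) ∈ E) (hlc : layer c < layer b) (hac : a ≠ c) :
    s(a, c) ∈ E :=
  (hlay.2.2.2.2.1 b hb (Nat.zero_lt_of_lt hla)).2 a (by simp [ha, hab, hla]) c
    (by simp [hc, hcb, hlc]) hac

lemma exists_lower_neighbor (hlay : LayerDecomp k V E layer t) {v : ℕ} (hv : v ∈ V)
    (hpos : 0 < layer v) : ∃ w ∈ V, s(v, w) ∈ E ∧ layer w < layer v := by
  obtain ⟨htV, ht, hcard, -, hlower, -⟩ := hlay
  have hk : 0 < k := hcard ▸ Finset.card_pos.mpr ⟨t, by simp [htV, ht]⟩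
  obtain ⟨w, hw⟩ := Finset.card_pos.mp ((hlower v hv hpos).1 ▸ hk)
  simp only [Finset.mem_filter] at hw
  exact ⟨w, hw.1, Sym2.eq_swap ▸ hw.2.1, hw.2.2⟩

lemma exists_walk_le_of_adj_of_layer_lt (hlay : LayerDecomp k V E layer t) {a b : ℕ}
    {q : List ℕ} (ha : a ∈ V) (hab : s(a, b) ∈ E) (hl : layer a < layer b)
    (hq : IsWalk V E b t q) : ∃ p, IsWalk V E a t p ∧ p.length ≤ q.length := by
  induction hn : q.length using Nat.strong_induction_on generalizing a b q with
  | _ n ih =>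
  obtain ⟨c, q, rfl⟩ := hq.exists_eq_cons_cons (hlay.ne_of_layer_pos (Nat.zero_lt_of_lt hl))
  obtain ⟨hbc, hc⟩ := hq.of_cons_cons
  have hb := hq.head_mem
  rcases (hlay.layer_ne hb hc.head_mem hbc).lt_or_gt with hup | hdown
  · obtain ⟨q', hq', hq'len⟩ := ih _ (by simp [← hn]) hb hbc hup hc rfl
    simp only [List.length_cons] at hn hq'len
    obtain ⟨p, hp, hplen⟩ := ih _ (by omega) ha hab hl hq' rfl
    exact ⟨p, hp, by omega⟩
  · by_cases hac : a = c
    · subst hac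
      exact ⟨_, hc, by simp [← hn]⟩
    · have hca : s(c, b) ∈ E := Sym2.eq_swap ▸ hbc
      exact ⟨_, hc.cons_s13 ha (hlay.adj_of_lower_neighbors hb ha hab hl hc.head_mem hca hdown hac),
        by simp [← hn]⟩

lemma exists_walk_le_of_lowest_neighbor (hlay : LayerDecomp k V E layer t) {s u v : ℕ}
    {q : List ℕ} (hs : s ∈ V) (hr : 0 < layer s) (hv : v ∈ V) (hsv : s(s, v) ∈ E)
    (hmin : ∀ w ∈ V, s(s, w) ∈ E → layer v ≤ layer w) (hsu : s(s, u) ∈ E)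
    (hq : IsWalk V E u t q) : ∃ p, IsWalk V E v t p ∧ p.length ≤ q.length := by
  have hvs : layer v < layer s := by
    obtain ⟨w, hw, hsw, hws⟩ := hlay.exists_lower_neighbor hs hr
    exact (hmin w hw hsw).trans_lt hws
  have hu := hq.head_mem
  have hvs' : s(v, s) ∈ E := Sym2.eq_swap ▸ hsv
  rcases (hlay.layer_ne hs hu hsu).lt_or_gt with hup | hdown
  · obtain ⟨q', hq', hq'len⟩ := hlay.exists_walk_le_of_adj_of_layer_lt hs hsu hup hq
    obtain ⟨p, hp, hplen⟩ := hlay.exists_walk_le_of_adj_of_layer_lt hv hvs' hvs hq'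
    exact ⟨p, hp, hplen.trans hq'len⟩
  · by_cases hvu : v = u
    · exact ⟨q, hvu ▸ hq, le_rfl⟩
    · have hvu' := hlay.adj_of_lower_neighbors hs hv hvs' hvs hu (Sym2.eq_swap ▸ hsu) hdown hvu
      exact hlay.exists_walk_le_of_adj_of_layer_lt hv hvu'
        ((hmin u hu hsu).lt_of_ne (hlay.layer_ne hv hu hvu')) hq

end LayerDecomp

end

theorem exists_shortest_path_lowest_neighbor_general (k : ℕ) (V : Finset ℕ)
    (E : Finset (Sym2 ℕ))
    (layer : ℕ → ℕ) (t : ℕ) (hlay : LayerDecomp k V E layer t)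
    (s : ℕ) (hs : s ∈ V) (hr : 0 < layer s)
    (hconn : ∃ q : List ℕ, IsWalk V E s t q) :
    ∃ p : List ℕ, IsShortestPath V E s t p ∧
      ∃ v : ℕ, p[1]? = some v ∧ s(s, v) ∈ E ∧
        ∀ u ∈ V, s(s, u) ∈ E → layer v ≤ layer u := by
  obtain ⟨w, hw, hsw, -⟩ := hlay.exists_lower_neighbor hs hr
  obtain ⟨v, hv, hmin⟩ :=
    Finset.exists_min_image (V.filter fun u => s(s, u) ∈ E) layer ⟨w, by simp [hw, hsw]⟩
  simp only [Finset.mem_filter, and_imp] at hv hmin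
  obtain ⟨p, hp⟩ := exists_isShortestPath hconn
  obtain ⟨u, q, rfl⟩ := hp.1.exists_eq_cons_cons (hlay.ne_of_layer_pos hr)
  obtain ⟨hsu, hq⟩ := hp.1.of_cons_cons
  obtain ⟨q', hq', hlen⟩ :=
    hlay.exists_walk_le_of_lowest_neighbor hs hr hv.1 hv.2 hmin hsu hq
  obtain ⟨q', rfl⟩ := hq'.eq_cons
  exact ⟨s :: v :: q', hp.of_length_le (hq'.cons_s13 hs hv.2) (by simpa using hlen), v, rfl, hv.2,
    hmin⟩

/-- In a layered `k`-tree with `t` in layer `0` and `s` in a layer `r > 0`,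
there is a shortest `s`–`t` path whose second vertex is a neighbour of `s`
lying in the lowest layer among all neighbours of `s`. -/
theorem exists_shortest_path_lowest_neighbor (k : ℕ) (V : Finset ℕ)
    (E : Finset (Sym2 ℕ)) (h : IsKTree k V E)
    (layer : ℕ → ℕ) (t : ℕ) (hlay : LayerDecomp k V E layer t)
    (s : ℕ) (hs : s ∈ V) (hr : 0 < layer s)
    (hconn : ∃ q : List ℕ, IsWalk V E s t q) :
    ∃ p : List ℕ, IsShortestPath V E s t p ∧
      ∃ v : ℕ, p[1]? = some v ∧ s(s, v) ∈ E ∧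
        ∀ u ∈ V, s(s, u) ∈ E → layer v ≤ layer u :=
  exists_shortest_path_lowest_neighbor_general k V E layer t hlay s hs hr hconn
end

section
/- Let H be a graph that is the union of subgraphs H₁,…,H_r which pairwise intersect exactly in a common vertex set V_s = {u₁,…,u_k} (i.e., V(H_i) ∩ V(H_j) = V_s for i ≠ j, and every edge of H lies in some H_j). For S ⊆ V_s, H has a matching leaving exactly the vertices of S unmatched if and only if there exists a partition T₁,…,T_r of V_s ∖ S such that for each j, H_j has a matching leaving exactly V_s ∖ T_j unmatched. -/
/-- `M` is a matching of the graph with vertex set `V` and edge set `E`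
leaving exactly the vertices of `U` unmatched: `M` consists of pairwise
disjoint non-loop edges of `E`, and the vertices of `V` covered by `M` are
precisely `V \ U`. -/
def IsMatchingLeaving (V : Finset ℕ) (E : Finset (Sym2 ℕ)) (U : Finset ℕ)
    (M : Finset (Sym2 ℕ)) : Prop :=
  M ⊆ E ∧ (∀ e ∈ M, ¬ e.IsDiag) ∧
  (∀ e ∈ M, ∀ f ∈ M, e ≠ f → ∀ v : ℕ, v ∈ e → v ∉ f) ∧
  U ⊆ V ∧ (∀ v ∈ V, (v ∈ U ↔ ∀ e ∈ M, v ∉ e))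

/-- Let `H` be the union of subgraphs `H₁, …, H_r` which pairwise intersect
exactly in a common vertex set `V_s` of size `k`. For `S ⊆ V_s`, `H` has a
matching leaving exactly `S` unmatched iff there is a partition
`T₁, …, T_r` of `V_s \ S` such that each `H_j` has a matching leaving
exactly `V_s \ T_j` unmatched. -/
theorem matching_union_characterization (k r : ℕ) (hr : 0 < r)
    (Vs : Finset ℕ) (hk : Vs.card = k)
    (Vj : Fin r → Finset ℕ) (Ej : Fin r → Finset (Sym2 ℕ))
    (hVs : ∀ j, Vs ⊆ Vj j)
    (hint : ∀ i j, i ≠ j → Vj i ∩ Vj j = Vs)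
    (hEj : ∀ j, ∀ e ∈ Ej j, ∀ v : ℕ, v ∈ e → v ∈ Vj j)
    (V : Finset ℕ) (hV : V = Finset.univ.biUnion Vj)
    (E : Finset (Sym2 ℕ)) (hE : E = Finset.univ.biUnion Ej)
    (S : Finset ℕ) (hS : S ⊆ Vs) :
    (∃ M, IsMatchingLeaving V E S M) ↔
      ∃ T : Fin r → Finset ℕ,
        (∀ i j, i ≠ j → Disjoint (T i) (T j)) ∧
        Finset.univ.biUnion T = Vs \ S ∧
        ∀ j, ∃ Mj, IsMatchingLeaving (Vj j) (Ej j) (Vs \ T j) Mj := by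
  classical
  subst hV hE
  constructor
  · rintro ⟨M, hME, hdiag, hdisj, hSV, hcov⟩
    have hidx : ∀ e ∈ M, ∃ j : Fin r, e ∈ Ej j := by
      intro e he
      have h := hME he
      rw [Finset.mem_biUnion] at h
      obtain ⟨j, _, hj⟩ := h
      exact ⟨j, hj⟩
    set idx : Sym2 ℕ → Fin r := fun e =>
      if h : ∃ j : Fin r, e ∈ Ej j then h.choose else ⟨0, hr⟩ with hidxdef
    have hidxmem : ∀ e ∈ M, e ∈ Ej (idx e) := by
      intro e he
      have h := hidx e he
      simp only [hidxdef, dif_pos h]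
      exact h.choose_spec
    set Mj : Fin r → Finset (Sym2 ℕ) := fun j => M.filter (fun e => idx e = j) with hMjdef
    have hMjmem : ∀ j e, e ∈ Mj j ↔ e ∈ M ∧ idx e = j := by
      intro j e; simp [hMjdef]
    set T : Fin r → Finset ℕ := fun j => Vs.filter (fun v => ∃ e ∈ Mj j, v ∈ e) with hTdef
    have hTmem : ∀ j v, v ∈ T j ↔ v ∈ Vs ∧ ∃ e ∈ Mj j, v ∈ e := by
      intro j v; simp [hTdef]
    -- a vertex of Vj j outside Vs matched by e ∈ M forces e ∈ Mj j
    have hkey : ∀ (j : Fin r) (v : ℕ), v ∈ Vj j → v ∉ Vs → ∀ e ∈ M, v ∈ e → e ∈ Mj j := by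
      intro j v hvj hvs e he hve
      have hvE : v ∈ Vj (idx e) := hEj _ e (hidxmem e he) v hve
      rw [hMjmem]
      refine ⟨he, ?_⟩
      by_contra hne
      have : v ∈ Vj (idx e) ∩ Vj j := Finset.mem_inter.2 ⟨hvE, hvj⟩
      rw [hint _ _ hne] at this
      exact hvs this
    -- vertices of V outside S are matched by M
    have hmatched : ∀ v ∈ Finset.univ.biUnion Vj, v ∉ S → ∃ e ∈ M, v ∈ e := by
      intro v hv hvS
      by_contra h
      push_neg at h
      exact hvS ((hcov v hv).2 (fun e he hve => h e he hve))
    refine ⟨T, ?_, ?_, ?_⟩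
    · intro i j hij
      rw [Finset.disjoint_left]
      intro v hvi hvj
      obtain ⟨hvs, e, he, hve⟩ := (hTmem i v).1 hvi
      obtain ⟨-, f, hf, hvf⟩ := (hTmem j v).1 hvj
      have hei := (hMjmem i e).1 he
      have hfj := (hMjmem j f).1 hf
      have hef : e ≠ f := by
        intro h; subst h; exact hij (hei.2.symm.trans hfj.2)
      exact hdisj e hei.1 f hfj.1 hef v hve hvf
    · ext v
      simp only [Finset.mem_biUnion, Finset.mem_univ, true_and, Finset.mem_sdiff]
      constructor
      · rintro ⟨j, hvT⟩
        obtain ⟨hvs, e, he, hve⟩ := (hTmem j v).1 hvT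
        refine ⟨hvs, fun hvS => ?_⟩
        have hvV : v ∈ Finset.univ.biUnion Vj :=
          Finset.mem_biUnion.2 ⟨⟨0, hr⟩, Finset.mem_univ _, hVs _ hvs⟩
        exact (hcov v hvV).1 hvS e ((hMjmem j e).1 he).1 hve
      · rintro ⟨hvs, hvS⟩
        have hvV : v ∈ Finset.univ.biUnion Vj :=
          Finset.mem_biUnion.2 ⟨⟨0, hr⟩, Finset.mem_univ _, hVs _ hvs⟩
        obtain ⟨e, he, hve⟩ := hmatched v hvV hvS
        exact ⟨idx e, (hTmem _ v).2 ⟨hvs, e, (hMjmem _ e).2 ⟨he, rfl⟩, hve⟩⟩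
    · intro j
      refine ⟨Mj j, ?_, ?_, ?_, ?_, ?_⟩
      · intro e he
        obtain ⟨heM, hei⟩ := (hMjmem j e).1 he
        have := hidxmem e heM
        rwa [hei] at this
      · intro e he; exact hdiag e ((hMjmem j e).1 he).1
      · intro e he f hf hef v hve
        exact hdisj e ((hMjmem j e).1 he).1 f ((hMjmem j f).1 hf).1 hef v hve
      · exact (Finset.sdiff_subset).trans (hVs j)
      · intro v hvj
        constructor
        · intro hv e he hve
          rw [Finset.mem_sdiff] at hv
          exact hv.2 ((hTmem j v).2 ⟨hv.1, e, he, hve⟩)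
        · intro hv
          rw [Finset.mem_sdiff]
          by_cases hvs : v ∈ Vs
          · refine ⟨hvs, fun hvT => ?_⟩
            obtain ⟨-, e, he, hve⟩ := (hTmem j v).1 hvT
            exact hv e he hve
          · exfalso
            have hvV : v ∈ Finset.univ.biUnion Vj :=
              Finset.mem_biUnion.2 ⟨j, Finset.mem_univ _, hvj⟩
            have hvS : v ∉ S := fun h => hvs (hS h)
            obtain ⟨e, he, hve⟩ := hmatched v hvV hvS
            exact hv e (hkey j v hvj hvs e he hve) hve
  · rintro ⟨T, hTdisj, hTunion, hMj⟩
    choose Mj hMj using hMj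
    have hTsub : ∀ j, T j ⊆ Vs \ S := by
      intro j
      rw [← hTunion]
      exact Finset.subset_biUnion_of_mem T (Finset.mem_univ j)
    refine ⟨Finset.univ.biUnion Mj, ?_, ?_, ?_, ?_, ?_⟩
    · intro e he
      obtain ⟨j, -, hej⟩ := Finset.mem_biUnion.1 he
      exact Finset.mem_biUnion.2 ⟨j, Finset.mem_univ _, (hMj j).1 hej⟩
    · intro e he
      obtain ⟨j, -, hej⟩ := Finset.mem_biUnion.1 he
      exact (hMj j).2.1 e hej
    · intro e he f hf hef v hve hvf
      obtain ⟨i, -, hei⟩ := Finset.mem_biUnion.1 he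
      obtain ⟨j, -, hfj⟩ := Finset.mem_biUnion.1 hf
      by_cases hij : i = j
      · subst hij
        exact (hMj i).2.2.1 e hei f hfj hef v hve hvf
      · have hvi : v ∈ Vj i := hEj i e ((hMj i).1 hei) v hve
        have hvj : v ∈ Vj j := hEj j f ((hMj j).1 hfj) v hvf
        have hvs : v ∈ Vs := by
          rw [← hint i j hij]; exact Finset.mem_inter.2 ⟨hvi, hvj⟩
        have hvTi : v ∈ T i := by
          by_contra h
          exact ((hMj i).2.2.2.2 v hvi).1 (Finset.mem_sdiff.2 ⟨hvs, h⟩) e hei hve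
        have hvTj : v ∈ T j := by
          by_contra h
          exact ((hMj j).2.2.2.2 v hvj).1 (Finset.mem_sdiff.2 ⟨hvs, h⟩) f hfj hvf
        exact Finset.disjoint_left.1 (hTdisj i j hij) hvTi hvTj
    · intro v hv
      exact Finset.mem_biUnion.2 ⟨⟨0, hr⟩, Finset.mem_univ _, hVs _ (hS hv)⟩
    · intro v hv
      constructor
      · intro hvS e he hve
        obtain ⟨j, -, hej⟩ := Finset.mem_biUnion.1 he
        have hvj : v ∈ Vj j := hEj j e ((hMj j).1 hej) v hve
        have hvT : v ∉ T j := fun h => (Finset.mem_sdiff.1 (hTsub j h)).2 hvS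
        exact ((hMj j).2.2.2.2 v hvj).1 (Finset.mem_sdiff.2 ⟨hS hvS, hvT⟩) e hej hve
      · intro hunm
        obtain ⟨j, -, hvj⟩ := Finset.mem_biUnion.1 hv
        have hunmj : ∀ i : Fin r, ∀ e ∈ Mj i, v ∉ e := fun i e he =>
          hunm e (Finset.mem_biUnion.2 ⟨i, Finset.mem_univ _, he⟩)
        have hvs : v ∈ Vs := by
          by_contra h
          have := ((hMj j).2.2.2.2 v hvj).2 (hunmj j)
          exact h (Finset.mem_sdiff.1 this).1
        have hvT : ∀ i, v ∉ T i := by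
          intro i hvT
          have hvi : v ∈ Vj i := hVs i hvs
          have := ((hMj i).2.2.2.2 v hvi).2 (hunmj i)
          exact (Finset.mem_sdiff.1 this).2 hvT
        by_contra hvS
        have : v ∈ Vs \ S := Finset.mem_sdiff.2 ⟨hvs, hvS⟩
        rw [← hTunion, Finset.mem_biUnion] at this
        obtain ⟨i, -, hi⟩ := this
        exact hvT i hi
end

section
/- Let T be a finite rooted tree where each node carries a value from a totally ordered commutative monoid (ℕ, +, max): leaves carry positive integer weights, internal nodes are labeled either '+' or 'max', and eval is defined recursively. Let m exceed the sum of all leaf weights and let r ≥ 2. Replace each '+' node by '×', each 'max' node by '+', and each leaf weight w by r^{m·w}; let v' be the value of the resulting {+,×}-tree. Then the value v of the original {+,max}-tree satisfies v = ⌊(log_r v') / m⌋. -/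
/-!
Under the substitution, a `{+, max}`-tree of value `v` evaluates to
`r ^ (m * v) ≤ v' < r ^ (m * v + leafSum t)`: products of powers add exponents, and a sum of two
terms below `r ^ k` stays below `r ^ (k + 1)` because `r ≥ 2`; the positive leaves of each side
of a `max` node pay for that extra exponent. As `leafSum t < m`, `log_r v'` lies in
`[m * v, m * (v + 1))`.
-/

/-- A `{+, max}`-tree: leaves carry natural-number weights and internal nodes
are labeled `+` or `max`. -/
inductive MaxPlusTree where
  | leaf (w : ℕ)
  | plus (l r : MaxPlusTree)
  | mx (l r : MaxPlusTree)

/-- Evaluation of a `{+, max}`-tree. -/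
def evalMaxPlus : MaxPlusTree → ℕ
  | .leaf w => w
  | .plus a b => evalMaxPlus a + evalMaxPlus b
  | .mx a b => max (evalMaxPlus a) (evalMaxPlus b)

/-- Evaluation of the transformed `{+, ×}`-tree: each `+` node becomes `×`,
each `max` node becomes `+`, and each leaf weight `w` becomes `r ^ (m·w)`. -/
def evalPlusTimes (r m : ℕ) : MaxPlusTree → ℕ
  | .leaf w => r ^ (m * w)
  | .plus a b => evalPlusTimes r m a * evalPlusTimes r m b
  | .mx a b => evalPlusTimes r m a + evalPlusTimes r m b

/-- The sum of all leaf weights of a tree. -/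
def leafSum : MaxPlusTree → ℕ
  | .leaf w => w
  | .plus a b => leafSum a + leafSum b
  | .mx a b => leafSum a + leafSum b

/-- All leaf weights are positive. -/
def leavesPos : MaxPlusTree → Prop
  | .leaf w => 0 < w
  | .plus a b => leavesPos a ∧ leavesPos b
  | .mx a b => leavesPos a ∧ leavesPos b

lemma Nat.add_lt_pow_of_lt_pow {r x y i j k : ℕ} (hr : 2 ≤ r) (hx : x < r ^ i) (hy : y < r ^ j)
    (hi : i < k) (hj : j < k) : x + y < r ^ k := by
  have hx' : x < r ^ (k - 1) := hx.trans_le (Nat.pow_le_pow_right (by omega) (by omega))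
  have hy' : y < r ^ (k - 1) := hy.trans_le (Nat.pow_le_pow_right (by omega) (by omega))
  calc x + y < 2 * r ^ (k - 1) := by omega
    _ ≤ r * r ^ (k - 1) := Nat.mul_le_mul_right _ hr
    _ = r ^ k := by rw [← pow_succ']; congr 1; omega

namespace MaxPlusTree

lemma leafSum_pos {t : MaxPlusTree} (h : leavesPos t) : 0 < leafSum t := by
  induction t with
  | leaf w => exact h
  | plus a b ha _ | mx a b ha _ => exact Nat.add_pos_left (ha h.1) _

lemma pow_mul_evalMaxPlus_le_evalPlusTimes (r m : ℕ) (t : MaxPlusTree) :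
    r ^ (m * evalMaxPlus t) ≤ evalPlusTimes r m t := by
  induction t with
  | leaf w => exact le_rfl
  | plus a b ha hb =>
    calc r ^ (m * evalMaxPlus (a.plus b))
        = r ^ (m * evalMaxPlus a) * r ^ (m * evalMaxPlus b) := by
          rw [evalMaxPlus, Nat.mul_add, pow_add]
      _ ≤ evalPlusTimes r m (a.plus b) := Nat.mul_le_mul ha hb
  | mx a b ha hb =>
    rcases max_cases (evalMaxPlus a) (evalMaxPlus b) with ⟨h, _⟩ | ⟨h, _⟩
    · calc r ^ (m * evalMaxPlus (a.mx b)) = r ^ (m * evalMaxPlus a) := by rw [evalMaxPlus, h]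
        _ ≤ evalPlusTimes r m (a.mx b) := ha.trans (Nat.le_add_right _ _)
    · calc r ^ (m * evalMaxPlus (a.mx b)) = r ^ (m * evalMaxPlus b) := by rw [evalMaxPlus, h]
        _ ≤ evalPlusTimes r m (a.mx b) := hb.trans (Nat.le_add_left _ _)

lemma evalPlusTimes_lt_pow {r : ℕ} (hr : 2 ≤ r) (m : ℕ) {t : MaxPlusTree} (hpos : leavesPos t) :
    evalPlusTimes r m t < r ^ (m * evalMaxPlus t + leafSum t) := by
  induction t with
  | leaf w =>
    exact Nat.pow_lt_pow_right hr (Nat.lt_add_of_pos_right (show 0 < w from hpos))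
  | plus a b ha hb =>
    calc evalPlusTimes r m (a.plus b)
        < r ^ (m * evalMaxPlus a + leafSum a) * r ^ (m * evalMaxPlus b + leafSum b) :=
          Nat.mul_lt_mul'' (ha hpos.1) (hb hpos.2)
      _ = r ^ (m * evalMaxPlus (a.plus b) + leafSum (a.plus b)) := by
          rw [← pow_add, evalMaxPlus, leafSum]; ring_nf
  | mx a b ha hb =>
    have hsa := leafSum_pos hpos.1
    have hsb := leafSum_pos hpos.2
    have hva : m * evalMaxPlus a ≤ m * evalMaxPlus (a.mx b) :=
      Nat.mul_le_mul_left _ (le_max_left _ _)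
    have hvb : m * evalMaxPlus b ≤ m * evalMaxPlus (a.mx b) :=
      Nat.mul_le_mul_left _ (le_max_right _ _)
    exact Nat.add_lt_pow_of_lt_pow hr (ha hpos.1) (hb hpos.2)
      (by simp only [leafSum]; omega) (by simp only [leafSum]; omega)

end MaxPlusTree

/-- If all leaf weights are positive, `m` exceeds the sum of all leaf weights
and `r ≥ 2`, then the value `v` of a `{+, max}`-tree is recovered from the
value `v'` of the transformed `{+, ×}`-tree as `v = ⌊(log_r v') / m⌋`. -/
theorem maxPlus_eval_eq_log_div (t : MaxPlusTree) (r m : ℕ)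
    (hr : 2 ≤ r) (hpos : leavesPos t) (hm : leafSum t < m) :
    evalMaxPlus t = Nat.log r (evalPlusTimes r m t) / m := by
  have hlower := MaxPlusTree.pow_mul_evalMaxPlus_le_evalPlusTimes r m t
  have hupper := MaxPlusTree.evalPlusTimes_lt_pow hr m hpos
  have hlog_ge : m * evalMaxPlus t ≤ Nat.log r (evalPlusTimes r m t) :=
    Nat.le_log_of_pow_le hr hlower
  have hlog_lt : Nat.log r (evalPlusTimes r m t) < m * evalMaxPlus t + m :=
    Nat.log_lt_of_lt_pow ((pow_pos (by omega) _).trans_le hlower).ne'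
      (hupper.trans_le (Nat.pow_le_pow_right (by omega) (by omega)))
  symm
  apply Nat.div_eq_of_lt_le
  · rwa [Nat.mul_comm]
  · rwa [Nat.succ_mul, Nat.mul_comm]
end
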